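/- arXiv:1901.09301 — 2 statements merged into one kernel-verified Lean document; each statement's English description precedes it below -/
import Mathlib

section
/- Let R be a Noetherian integrally closed domain and let p₀ be a height one prime ideal of R[x] containing a monic polynomial. Then p₀ is a principal ideal, generated by the monic polynomial of minimal degree in p₀. -/
open Polynomial

/-- Let `R` be a Noetherian integrally closed domain and `p₀` a height one prime ideal of
`R[x]` containing a monic polynomial.  Then `p₀` is principal, generated by a monic
polynomial of minimal degree in `p₀`. -/
theorem height_one_prime_of_polynomial_principal
    (R : Type*) [CommRing R] [IsDomain R] [IsNoetherianRing R] [IsIntegrallyClosed R]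
    (p₀ : Ideal (Polynomial R)) (hp : p₀.IsPrime)
    (hht : Order.height (⟨p₀, hp⟩ : PrimeSpectrum (Polynomial R)) = 1)
    (hmin : Polynomial R) (hmonic : hmin.Monic) (hmem : hmin ∈ p₀)
    (hminimal : ∀ g : Polynomial R, g.Monic → g ∈ p₀ → hmin.degree ≤ g.degree) :
    p₀ = Ideal.span {hmin} := by
  have hne1 : p₀ ≠ ⊤ := hp.ne_top
  -- hmin is not a unit (degree ≥ 1)
  have hdeg : 0 < hmin.degree := by
    by_contra h
    push_neg at h
    have : hmin = 1 := hmonic.degree_le_zero_iff_eq_one.mp h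
    exact hne1 (p₀.eq_top_of_isUnit_mem hmem (this ▸ isUnit_one))
  have hnu : ¬ IsUnit hmin := by
    intro h
    have := degree_eq_zero_of_isUnit h
    rw [this] at hdeg
    exact lt_irrefl _ hdeg
  -- hmin is irreducible
  have hirr : Irreducible hmin := by
    constructor
    · exact hnu
    · intro a b hab
      by_contra hc
      push_neg at hc
      obtain ⟨hca, hcb⟩ := hc
      have ha0 : a ≠ 0 := by rintro rfl; simp at hab; exact hmonic.ne_zero hab
      have hb0 : b ≠ 0 := by rintro rfl; simp at hab; exact hmonic.ne_zero hab
      have hlc : a.leadingCoeff * b.leadingCoeff = 1 := by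
        have := hmonic
        rw [Monic, hab, leadingCoeff_mul] at this
        exact this
      have hua : IsUnit a.leadingCoeff := IsUnit.of_mul_eq_one _ hlc
      have hub : IsUnit b.leadingCoeff := IsUnit.of_mul_eq_one _ (mul_comm a.leadingCoeff _ ▸ hlc)
      -- normalize to monic factors
      set a' : Polynomial R := C b.leadingCoeff * a with ha'
      set b' : Polynomial R := C a.leadingCoeff * b with hb'
      have hma' : a'.Monic := by
        rw [Monic, ha', leadingCoeff_mul, leadingCoeff_C, mul_comm]
        exact hlc
      have hmb' : b'.Monic := by
        rw [Monic, hb', leadingCoeff_mul, leadingCoeff_C]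
        exact hlc
      have hprod : hmin = a' * b' := by
        rw [ha', hb']
        calc hmin = C (b.leadingCoeff * a.leadingCoeff) * (a * b) := by
              rw [mul_comm b.leadingCoeff, hlc, C_1, one_mul, hab]
          _ = C b.leadingCoeff * a * (C a.leadingCoeff * b) := by rw [C_mul]; ring
      have hdega : a'.degree = a.degree := by
        rw [ha']; rw [degree_C_mul (by
          intro h; rw [h] at hub; exact (not_isUnit_zero hub).elim)]
      have hdegb : b'.degree = b.degree := by
        rw [hb']; rw [degree_C_mul (by
          intro h; rw [h] at hua; exact (not_isUnit_zero hua).elim)]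
      have hsum : hmin.degree = a'.degree + b'.degree := by
        rw [hprod, degree_mul]
      have hdega' : 0 < a'.degree := by
        rcases lt_or_ge 0 a'.degree with h | h
        · exact h
        · have : a' = 1 := hma'.degree_le_zero_iff_eq_one.mp h
          rw [ha'] at this
          exact absurd (IsUnit.of_mul_eq_one _ (by rw [mul_comm]; exact this)) hca
      have hdegb' : 0 < b'.degree := by
        rcases lt_or_ge 0 b'.degree with h | h
        · exact h
        · have : b' = 1 := hmb'.degree_le_zero_iff_eq_one.mp h
          rw [hb'] at this
          exact absurd (IsUnit.of_mul_eq_one _ (by rw [mul_comm]; exact this)) hcb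
      -- one of a', b' is in p₀
      have hmem' : a' * b' ∈ p₀ := hprod ▸ hmem
      have hda : a'.degree < hmin.degree := by
        rw [hsum]
        calc a'.degree = a'.degree + 0 := by
              cases h : a'.degree with
              | bot => simp [h] at hdega'
              | coe n => simp
          _ < a'.degree + b'.degree := by
              apply WithBot.add_lt_add_left
              · intro h; rw [h] at hdega'; exact absurd hdega' (by simp)
              · exact hdegb'
      have hdb : b'.degree < hmin.degree := by
        rw [hsum]
        calc b'.degree = 0 + b'.degree := by
              cases h : b'.degree with
              | bot => simp [h] at hdegb'
              | coe n => simp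
          _ < a'.degree + b'.degree := by
              apply WithBot.add_lt_add_right
              · intro h; rw [h] at hdegb'; exact absurd hdegb' (by simp)
              · exact hdega'
      rcases hp.mem_or_mem hmem' with h | h
      · exact absurd (hminimal a' hma' h) (not_le.mpr hda)
      · exact absurd (hminimal b' hmb' h) (not_le.mpr hdb)
  -- hmin is prime, via the fraction field
  have hprime : Prime hmin := by
    set K := FractionRing R
    have hinj : Function.Injective (algebraMap R K) := IsFractionRing.injective R K
    have hirrK : Irreducible (hmin.map (algebraMap R K)) :=
      (hmonic.irreducible_iff_irreducible_map_fraction_map (K := K)).mp hirr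
    have hpK : Prime (hmin.map (algebraMap R K)) := hirrK.prime
    refine ⟨hmonic.ne_zero, hnu, fun a b hab => ?_⟩
    have : hmin.map (algebraMap R K) ∣ a.map (algebraMap R K) * b.map (algebraMap R K) := by
      rw [← Polynomial.map_mul]
      exact Polynomial.map_dvd _ hab
    rcases hpK.2.2 _ _ this with h | h
    · exact Or.inl ((Polynomial.map_dvd_map _ hinj hmonic).mp h)
    · exact Or.inr ((Polynomial.map_dvd_map _ hinj hmonic).mp h)
  -- span {hmin} is a nonzero prime ideal contained in p₀
  have hspan_prime : (Ideal.span {hmin}).IsPrime :=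
    (Ideal.span_singleton_prime hmonic.ne_zero).mpr hprime
  have hle : Ideal.span {hmin} ≤ p₀ := by
    rw [Ideal.span_le]; simpa using hmem
  by_contra hne
  have hlt : Ideal.span {hmin} < p₀ := lt_of_le_of_ne hle (Ne.symm hne)
  have hbotlt : (⊥ : Ideal (Polynomial R)) < Ideal.span {hmin} := by
    rw [bot_lt_iff_ne_bot, Ne, Ideal.span_singleton_eq_bot]
    exact hmonic.ne_zero
  -- build a chain of length 2 ending at p₀
  let c : LTSeries (PrimeSpectrum (Polynomial R)) :=
    ((RelSeries.singleton _ (⟨⊥, Ideal.bot_prime⟩ : PrimeSpectrum (Polynomial R))).snoc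
      ⟨Ideal.span {hmin}, hspan_prime⟩ (by
        show (⟨⊥, Ideal.bot_prime⟩ : PrimeSpectrum (Polynomial R)) < _
        exact hbotlt)).snoc ⟨p₀, hp⟩ (by
        show _ < (⟨p₀, hp⟩ : PrimeSpectrum (Polynomial R))
        rw [RelSeries.last_snoc]
        exact hlt)
  have h2 : (2 : ℕ∞) ≤ Order.height (⟨p₀, hp⟩ : PrimeSpectrum (Polynomial R)) := by
    have := Order.length_le_height_last (p := c)
    simpa [c, RelSeries.last_snoc] using this
  rw [hht] at h2
  exact absurd h2 (by norm_num)
end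

section
/- Let R be a discrete valuation ring with uniformizer π, let 0 → L →^A L^r → Y → 0 be a short exact sequence of R-modules with L finite free, A an injective R-linear map, and let m be a positive integer larger than all valuations of the invariant factors of A. Then ker(L/π^m L →^A (L/π^m L)^r) is isomorphic to Y[π^m], the π^m-torsion submodule of Y, and both are isomorphic to ⊕ᵢ R/(π^{mᵢ}) where π^{mᵢ} are the invariant factors of A. -/
/-!
Multiply the short exact sequence `0 → L → L^r → Y → 0` by `a = π^m`. Since `a` is injective on
the free module `L^r`, the snake lemma identifies `Y[a]` with the kernel of `L/aL → L^r/aL^r`.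
In `Y ≅ (⊕ᵢ R/(π^{mᵢ})) ⊕ R^s` the free summand has no `a`-torsion, while `a` kills the torsion
summand because `mᵢ < m`.
-/

open Function Submodule
open scoped Pointwise

section
variable {R M N : Type*} [CommRing R] [AddCommGroup M] [Module R M] [AddCommGroup N] [Module R N]

theorem Submodule.map_torsionBy_linearEquiv (e : M ≃ₗ[R] N) (a : R) :
    (torsionBy R M a).map (e : M →ₗ[R] N) = torsionBy R N a := by
  ext y
  rw [mem_map_equiv, mem_torsionBy_iff, mem_torsionBy_iff, ← e.symm.map_smul,
    e.symm.map_eq_zero_iff]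

noncomputable def LinearEquiv.torsionBy (e : M ≃ₗ[R] N) (a : R) :
    torsionBy R M a ≃ₗ[R] torsionBy R N a :=
  e.ofSubmodules _ _ (map_torsionBy_linearEquiv e a)

noncomputable def Submodule.torsionByProdEquivOfIsSMulRegular {a : R}
    (hM : Module.IsTorsionBy R M a) (hN : IsSMulRegular N a) :
    torsionBy R (M × N) a ≃ₗ[R] M := by
  refine .ofBijective (LinearMap.fst R M N ∘ₗ (torsionBy R (M × N) a).subtype) ⟨?_, fun x ↦ ?_⟩
  · have snd_eq_zero (z : torsionBy R (M × N) a) : (z : M × N).2 = 0 :=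
      hN.right_eq_zero_of_smul (congrArg Prod.snd ((mem_torsionBy_iff _ _).mp z.2))
    intro z w hzw
    exact Subtype.ext (Prod.ext hzw ((snd_eq_zero z).trans (snd_eq_zero w).symm))
  · exact ⟨⟨(x, 0), by simp [hM]⟩, rfl⟩

theorem Submodule.smul_top_eq_range_toLinearMap (a : R) :
    a • (⊤ : Submodule R M) = LinearMap.range (DistribSMul.toLinearMap R M a) :=
  (LinearMap.range_eq_map _).symm

theorem Submodule.exact_toLinearMap_mkQ_span_singleton_smul_top (a : R) :
    Exact (DistribSMul.toLinearMap R M a) (Ideal.span {a} • (⊤ : Submodule R M)).mkQ := by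
  rw [ideal_span_singleton_smul, smul_top_eq_range_toLinearMap]
  exact LinearMap.exact_map_mkQ_range _

noncomputable def Submodule.torsionByQuotRangeEquivKerMapQ (f : M →ₗ[R] N) (hf : Injective f)
    (a : R) (ha : IsSMulRegular N a) :
    torsionBy R (N ⧸ LinearMap.range f) a ≃ₗ[R]
      LinearMap.ker (mapQ (Ideal.span {a} • ⊤) (Ideal.span {a} • ⊤) f
        (smul_top_le_comap_smul_top _ f)) := by
  -- Snake lemma for multiplication by `a` on `0 → M → N → N ⧸ M → 0`: its connecting map
  -- `(N ⧸ M)[a] → M ⧸ aM` is injective because `N[a] = 0`, with image the kernel of `M/aM → N/aN`.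
  let p := LinearMap.range f
  have hrow : Exact f p.mkQ := LinearMap.exact_map_mkQ_range f
  have hsq₁ : f ∘ₗ DistribSMul.toLinearMap R M a = DistribSMul.toLinearMap R N a ∘ₗ f := by
    ext; simp
  have hsq₂ : p.mkQ ∘ₗ DistribSMul.toLinearMap R N a =
      DistribSMul.toLinearMap R (N ⧸ p) a ∘ₗ p.mkQ := by
    ext; simp
  have hker₂ : Exact (0 : PUnit →ₗ[R] N) (DistribSMul.toLinearMap R N a) :=
    (LinearMap.exact_zero_iff_injective _ _).mpr ha
  have hker₃ : Exact (torsionBy R (N ⧸ p) a).subtype (DistribSMul.toLinearMap R (N ⧸ p) a) :=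
    LinearMap.exact_subtype_ker_map _
  have hδ_inj := SnakeLemma.exact_δ'_right _ _ _ f p.mkQ hrow f p.mkQ hrow hsq₁ hsq₂ 0 hker₂ _
    hker₃ _ (exact_toLinearMap_mkQ_span_singleton_smul_top a) p.mkQ_surjective hf 0 (by simp)
    Subtype.val_injective
  have hδ_range := SnakeLemma.exact_δ'_left _ _ _ f p.mkQ hrow f p.mkQ hrow hsq₁ hsq₂ _ hker₃
    _ (exact_toLinearMap_mkQ_span_singleton_smul_top a) _
    (exact_toLinearMap_mkQ_span_singleton_smul_top a) p.mkQ_surjective hf _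
    (mapQ_mkQ _ _ _ (h := smul_top_le_comap_smul_top _ f)) (mkQ_surjective _)
  exact (LinearEquiv.ofInjective _ ((LinearMap.exact_zero_iff_injective _ _).mp hδ_inj)).trans
    (LinearEquiv.ofEq _ _ hδ_range.linearMap_ker_eq.symm)

end

theorem Module.isTorsionBy_quotient_span_singleton {R : Type*} [CommRing R] {a b : R}
    (h : b ∣ a) : Module.IsTorsionBy R (R ⧸ Ideal.span {b}) a :=
  (isTorsionBy_quotient_iff _ _).mpr fun x ↦
    Ideal.mem_span_singleton.mpr (h.mul_right x)

theorem Module.isTorsionBy_pi {R ι : Type*} [CommRing R] {M : ι → Type*}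
    [∀ i, AddCommGroup (M i)] [∀ i, Module R (M i)] {a : R}
    (h : ∀ i, Module.IsTorsionBy R (M i) a) : Module.IsTorsionBy R (∀ i, M i) a :=
  fun x ↦ funext fun i ↦ h i (x := x i)

/-- Let `R` be a DVR with uniformizer `π`, `0 → L →A L^r → Y → 0` a short exact sequence
with `L` finite free and `A` injective, with invariant factors `π^{mᵢ}` (so that
`Y ≅ (⊕ᵢ R/(π^{mᵢ})) ⊕ R^s`), and let `m` exceed all the `mᵢ`.  Then the kernel of the map
`L/π^m L → (L/π^m L)^r` induced by `A` is isomorphic to the `π^m`-torsion submodule `Y[π^m]`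
of `Y`, and both are isomorphic to `⊕ᵢ R/(π^{mᵢ})`. -/
theorem ker_mod_pim_eq_torsion
    (R : Type*) [CommRing R] [IsDomain R]
    (π : R) (hπ : Irreducible π)
    (n r : ℕ) (A : (Fin n → R) →ₗ[R] (Fin r → Fin n → R))
    (hA : Function.Injective A)
    (k s : ℕ) (mi : Fin k → ℕ)
    (hY : Nonempty
      (((Fin r → Fin n → R) ⧸ LinearMap.range A) ≃ₗ[R]
        (((i : Fin k) → R ⧸ Ideal.span {π ^ mi i}) × (Fin s → R))))
    (m : ℕ) (hm : ∀ i, mi i < m) :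
    Nonempty
        ((LinearMap.ker
            (Submodule.mapQ
              ((Ideal.span {π ^ m}) • (⊤ : Submodule R (Fin n → R)))
              ((Ideal.span {π ^ m}) • (⊤ : Submodule R (Fin r → Fin n → R)))
              A
              (by
                rw [← Submodule.map_le_iff_le_comap, Submodule.map_smul'']
                exact smul_mono_right _ le_top))) ≃ₗ[R]
          (Submodule.torsionBy R ((Fin r → Fin n → R) ⧸ LinearMap.range A) (π ^ m))) ∧
      Nonempty
        ((LinearMap.ker
            (Submodule.mapQ
              ((Ideal.span {π ^ m}) • (⊤ : Submodule R (Fin n → R)))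
              ((Ideal.span {π ^ m}) • (⊤ : Submodule R (Fin r → Fin n → R)))
              A
              (by
                rw [← Submodule.map_le_iff_le_comap, Submodule.map_smul'']
                exact smul_mono_right _ le_top))) ≃ₗ[R]
          ((i : Fin k) → R ⧸ Ideal.span {π ^ mi i})) := by
  have ha : π ^ m ≠ 0 := pow_ne_zero m hπ.ne_zero
  have htors : Module.IsTorsionBy R ((i : Fin k) → R ⧸ Ideal.span {π ^ mi i}) (π ^ m) :=
    Module.isTorsionBy_pi fun i ↦
      Module.isTorsionBy_quotient_span_singleton (pow_dvd_pow π (hm i).le)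
  obtain ⟨e⟩ := hY
  let eK := (torsionByQuotRangeEquivKerMapQ A hA (π ^ m) (.of_ne_zero ha)).symm
  exact ⟨⟨eK⟩,
    ⟨eK ≪≫ₗ e.torsionBy _ ≪≫ₗ torsionByProdEquivOfIsSMulRegular htors (.of_ne_zero ha)⟩⟩
end
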